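/- Let v be subharmonic on a rectangle P ⊂ ℝ², bounded above on P by a measurable majorant M̃(y) depending only on the second coordinate, and let F(t) = λ₁({y : M̃(y) ≥ t}) (one-dimensional Lebesgue measure). Suppose z ∈ P satisfies v(z) ≥ 𝒞 for some 𝒞 > 0 and d(z, ∂P) > (8/π) F(𝒞/2). Then there exists ζ ∈ P with |z − ζ| ≤ (8/π) F(𝒞/2) and v(ζ) ≥ 2𝒞. -/

import Mathlib

open MeasureTheory

/-- The open rectangle `(-a,a) × (-b,b)` viewed as a subset of `ℂ`. -/
def Rect (a b : ℝ) : Set ℂ := {z | |z.re| < a ∧ |z.im| < b}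

/-- A function is subharmonic on `s` if it is upper semicontinuous on `s` and satisfies
the sub-mean-value inequality on closed disks contained in `s`. -/
def SubharmonicOn (v : ℂ → ℝ) (s : Set ℂ) : Prop :=
  UpperSemicontinuousOn v s ∧
    ∀ z r, 0 < r → Metric.closedBall z r ⊆ s →
      v z ≤ ⨍ w in Metric.closedBall z r, v w

/-!
Suppose `v < 2𝒞` on the closed disk `B` of radius `r = (8/π) F(𝒞/2)` about `z`. Off the horizontal
set `S = {w : Im w ∈ (-b, b), M̃(Im w) ≥ 𝒞/2}` we have `v < 𝒞/2` on `B`, while `B ∩ S` lies in a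
rectangle of width `2r` and height `F(𝒞/2)`, so it has measure at most `2r F(𝒞/2) = |B|/4`. The
sub-mean-value inequality on `B` then gives `𝒞 ≤ v(z) ≤ 𝒞/2 + (2𝒞 - 𝒞/2)/4 < 𝒞`. If `F(𝒞/2) = 0`
the same computation works on any small disk about `z`, since `B ∩ S` is then null.
-/

open Metric Set Real

theorem Complex.volume_reProdIm (s t : Set ℝ) : volume (s ×ℂ t) = volume s * volume t := by
  rw [← Measure.prod_prod, ← Measure.volume_eq_prod,
    ← volume_preserving_equiv_real_prod.measure_preimage_equiv]
  rfl

theorem Complex.volume_closedBall_inter_im_preimage_le (z : ℂ) (s : ℝ) (t : Set ℝ) :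
    volume (closedBall z s ∩ im ⁻¹' t) ≤ ENNReal.ofReal (2 * s) * volume t := by
  calc volume (closedBall z s ∩ im ⁻¹' t)
      ≤ volume (Icc (z.re - s) (z.re + s) ×ℂ t) := by
        refine measure_mono fun w ⟨hw, hwt⟩ ↦ ⟨?_, hwt⟩
        have := (abs_re_le_norm (w - z)).trans (mem_closedBall_iff_norm.1 hw)
        rw [sub_re, abs_le] at this
        exact ⟨by linarith, by linarith⟩
    _ = ENNReal.ofReal (2 * s) * volume t := by
        rw [volume_reProdIm, Real.volume_Icc]; ring_nf

theorem Complex.volume_real_closedBall (z : ℂ) {r : ℝ} (hr : 0 ≤ r) :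
    volume.real (closedBall z r) = π * r ^ 2 := by
  simp [measureReal_def, ENNReal.toReal_ofReal hr, mul_comm]

section
variable {α : Type*} [MeasurableSpace α] {μ : Measure α} {B S : Set α} {f : α → ℝ} {m M : ℝ}

theorem setIntegral_le_of_ae_le_inter_of_ae_le_sdiff (hB : μ B ≠ ⊤) (hS : MeasurableSet S)
    (hf : IntegrableOn f B μ) (hM : ∀ᵐ w ∂μ.restrict (B ∩ S), f w ≤ M)
    (hm : ∀ᵐ w ∂μ.restrict (B \ S), f w ≤ m) :
    ∫ w in B, f w ∂μ ≤ m * μ.real B + (M - m) * μ.real (B ∩ S) := by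
  have hBS : μ (B ∩ S) ≠ ⊤ := measure_ne_top_of_subset inter_subset_left hB
  have hBdS : μ (B \ S) ≠ ⊤ := measure_ne_top_of_subset sdiff_subset hB
  have hinter : ∫ w in B ∩ S, f w ∂μ ≤ M * μ.real (B ∩ S) := by
    simpa [mul_comm] using setIntegral_mono_ae_restrict (hf.mono_set inter_subset_left)
      (integrableOn_const hBS) hM
  have hdiff : ∫ w in B \ S, f w ∂μ ≤ m * μ.real (B \ S) := by
    simpa [mul_comm] using setIntegral_mono_ae_restrict (hf.mono_set sdiff_subset)
      (integrableOn_const hBdS) hm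
  rw [← integral_inter_add_sdiff hS hf, ← measureReal_inter_add_sdiff hS hB]
  linarith

theorem setAverage_le_of_ae_le_inter_of_ae_le_sdiff (hB : μ B ≠ ⊤) (hB0 : μ B ≠ 0)
    (hS : MeasurableSet S) (hm0 : 0 ≤ m) (hmM : m ≤ M)
    (hM : ∀ᵐ w ∂μ.restrict (B ∩ S), f w ≤ M) (hm : ∀ᵐ w ∂μ.restrict (B \ S), f w ≤ m) :
    ⨍ w in B, f w ∂μ ≤ m + (M - m) * (μ.real (B ∩ S) / μ.real B) := by
  have hBpos : 0 < μ.real B := ENNReal.toReal_pos hB0 hB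
  have hbonus : 0 ≤ (M - m) * (μ.real (B ∩ S) / μ.real B) :=
    mul_nonneg (by linarith) (div_nonneg measureReal_nonneg hBpos.le)
  by_cases hf : IntegrableOn f B μ
  · rw [setAverage_eq, smul_eq_mul, inv_mul_le_iff₀ hBpos]
    calc ∫ w in B, f w ∂μ ≤ m * μ.real B + (M - m) * μ.real (B ∩ S) :=
          setIntegral_le_of_ae_le_inter_of_ae_le_sdiff hB hS hf hM hm
      _ = μ.real B * (m + (M - m) * (μ.real (B ∩ S) / μ.real B)) := by field_simp
  · rw [setAverage_eq, integral_undef hf, smul_zero]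
    linarith
end

theorem Complex.setAverage_closedBall_le_of_le_off_im_preimage {v : ℂ → ℝ} {z : ℂ} {s C : ℝ}
    {T : Set ℝ} (hs : 0 < s) (hC : 0 ≤ C) (hT : MeasurableSet T)
    (hTvol : volume T ≤ ENNReal.ofReal (π * s / 8))
    (hlarge : ∀ᵐ w ∂volume.restrict (closedBall z s ∩ im ⁻¹' T), v w ≤ 2 * C)
    (hoff : ∀ w ∈ closedBall z s \ im ⁻¹' T, v w ≤ C / 2) :
    ⨍ w in closedBall z s, v w ≤ 7 / 8 * C := by
  set B := closedBall z s
  set S := im ⁻¹' T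
  have hS : MeasurableSet S := hT.preimage measurable_im
  have hBS : volume (B ∩ S) ≤ ENNReal.ofReal (π * s ^ 2 / 4) :=
    calc _ ≤ ENNReal.ofReal (2 * s) * volume T := volume_closedBall_inter_im_preimage_le z s T
      _ ≤ ENNReal.ofReal (2 * s) * ENNReal.ofReal (π * s / 8) := by gcongr
      _ = ENNReal.ofReal (π * s ^ 2 / 4) := by
        rw [← ENNReal.ofReal_mul (by positivity)]; ring_nf
  have hratio : volume.real (B ∩ S) / volume.real B ≤ 1 / 4 := by
    rw [volume_real_closedBall z hs.le, div_le_iff₀ (by positivity)]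
    have : volume.real (B ∩ S) ≤ π * s ^ 2 / 4 := ENNReal.toReal_le_of_le_ofReal (by positivity) hBS
    linarith
  have hmean := setAverage_le_of_ae_le_inter_of_ae_le_sdiff measure_closedBall_lt_top.ne
    (measure_closedBall_pos volume z hs).ne' hS (by positivity) (by linarith) hlarge
    (ae_restrict_of_forall_mem (measurableSet_closedBall.diff hS) hoff)
  have := mul_le_mul_of_nonneg_left hratio (by linarith : 0 ≤ 2 * C - C / 2)
  linarith

theorem stmt2_general (a b : ℝ) (v : ℂ → ℝ) (Mt : ℝ → ℝ)
    (hMmeas : Measurable Mt)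
    (hv : SubharmonicOn v (Rect a b))
    (hbd : ∀ w ∈ Rect a b, v w ≤ Mt w.im)
    (F : ℝ → ℝ)
    (hF : ∀ t, F t = (volume {y | y ∈ Set.Ioo (-b) b ∧ t ≤ Mt y}).toReal)
    (z : ℂ) (C : ℝ) (hC : 0 < C) (hvz : C ≤ v z)
    (hd : 8 / Real.pi * F (C / 2) < Metric.infDist z (Rect a b)ᶜ) :
    ∃ ζ ∈ Rect a b, dist z ζ ≤ 8 / Real.pi * F (C / 2) ∧ 2 * C ≤ v ζ := by
  by_contra! hlt
  set T : Set ℝ := {y | y ∈ Ioo (-b) b ∧ C / 2 ≤ Mt y}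
  have hT : MeasurableSet T := measurableSet_Ioo.inter (measurableSet_le measurable_const hMmeas)
  have hTvol : volume T = ENNReal.ofReal (F (C / 2)) := by
    rw [hF, ENNReal.ofReal_toReal]
    exact measure_ne_top_of_subset (fun y hy ↦ hy.1) (by simp)
  have hF0 : 0 ≤ F (C / 2) := by rw [hF]; positivity
  obtain ⟨s, hs0, hsd, hsF, hsr⟩ : ∃ s, 0 < s ∧ s < infDist z (Rect a b)ᶜ ∧
      8 * F (C / 2) ≤ π * s ∧ (s ≤ 8 / π * F (C / 2) ∨ F (C / 2) = 0) := by
    rcases hF0.lt_or_eq with hFpos | hFzero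
    · exact ⟨_, by positivity, hd, le_of_eq (by field_simp), .inl le_rfl⟩
    · rw [← hFzero, mul_zero] at hd
      refine ⟨infDist z (Rect a b)ᶜ / 2, by linarith, by linarith, ?_, .inr hFzero.symm⟩
      rw [← hFzero, mul_zero]
      positivity
  have hBP : closedBall z s ⊆ Rect a b :=
    (closedBall_subset_ball hsd).trans ball_infDist_compl_subset
  have hlarge : ∀ᵐ w ∂volume.restrict (closedBall z s ∩ Complex.im ⁻¹' T), v w ≤ 2 * C := by
    rcases hsr with hsr | hFzero
    · refine ae_restrict_of_forall_mem (measurableSet_closedBall.inter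
        (hT.preimage Complex.measurable_im)) fun w hw ↦ (hlt w (hBP hw.1) ?_).le
      exact (dist_comm z w).trans_le (hw.1.trans hsr)
    · have hnull : volume (closedBall z s ∩ Complex.im ⁻¹' T) = 0 := by
        simpa [hTvol, hFzero] using Complex.volume_closedBall_inter_im_preimage_le z s T
      simp [Measure.restrict_eq_zero.2 hnull]
  have hoff : ∀ w ∈ closedBall z s \ Complex.im ⁻¹' T, v w ≤ C / 2 := by
    rintro w ⟨hwB, hwT⟩
    by_contra! hvw
    exact hwT ⟨abs_lt.1 (hBP hwB).2, hvw.le.trans (hbd w (hBP hwB))⟩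
  have hmean := (hv.2 z s hs0 hBP).trans <|
    Complex.setAverage_closedBall_le_of_le_off_im_preimage hs0 hC.le hT
      (hTvol.trans_le (ENNReal.ofReal_le_ofReal (by linarith))) hlarge hoff
  linarith

/-- The doubling proposition in Domar's argument: if `v(z) ≥ 𝒞` and
`d(z, ∂P) > (8/π) F(𝒞/2)`, where `F(t) = λ₁{y : M̃(y) ≥ t}`, then there is `ζ ∈ P` with
`|z - ζ| ≤ (8/π) F(𝒞/2)` and `v(ζ) ≥ 2𝒞`. -/
theorem stmt2 (a b : ℝ) (ha : 0 < a) (hb : 0 < b) (v : ℂ → ℝ) (Mt : ℝ → ℝ)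
    (hMmeas : Measurable Mt)
    (hv : SubharmonicOn v (Rect a b))
    (hbd : ∀ w ∈ Rect a b, v w ≤ Mt w.im)
    (F : ℝ → ℝ)
    (hF : ∀ t, F t = (volume {y | y ∈ Set.Ioo (-b) b ∧ t ≤ Mt y}).toReal)
    (z : ℂ) (hz : z ∈ Rect a b) (C : ℝ) (hC : 0 < C) (hvz : C ≤ v z)
    (hd : 8 / Real.pi * F (C / 2) < Metric.infDist z (Rect a b)ᶜ) :
    ∃ ζ ∈ Rect a b, dist z ζ ≤ 8 / Real.pi * F (C / 2) ∧ 2 * C ≤ v ζ :=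
  stmt2_general a b v Mt hMmeas hv hbd F hF z C hC hvz hd
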